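/- arXiv:math/0410539 — 2 statements merged into one kernel-verified Lean document; each statement's English description precedes it below -/
import Mathlib

section
/- Assume Γ is a tree and T = Γ. Let k := min(⌊n/2⌋, m), where m is the number of essential vertices of Γ. Then every critical cell c of UD^nΓ satisfies dim c ≤ k. -/
open SimpleGraph

attribute [local instance] Classical.propDecidable

namespace GraphBraid

/-- The degree of a vertex, defined via `Set.ncard` to avoid decidability assumptions. -/
noncomputable def ncdeg {V : Type} (H : SimpleGraph V) (v : V) : ℕ := (H.neighborSet v).ncard

/-- The basic setup: a finite connected simple graph `G` with a spanning tree `T`,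
a root `root` of degree one in `T`, and a labelling of the edges of `T` incident to each
vertex `u` by the numbers `0, …, d_T(u) - 1`, where the edge towards the root receives the
label `0` (and the unique edge at the root receives the label `1`). -/
structure Setup (V : Type) [Fintype V] [DecidableEq V] where
  G : SimpleGraph V
  G_conn : G.Connected
  T : SimpleGraph V
  T_le : T ≤ G
  T_tree : T.IsTree
  root : V
  root_deg : ncdeg T root = 1
  label : V → V → ℕ
  label_bij : ∀ u : V, u ≠ root → Set.BijOn (label u) (T.neighborSet u) (Set.Iio (ncdeg T u))
  label_zero : ∀ u : V, u ≠ root → ∀ w : V, T.Adj u w →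
    (label u w = 0 ↔ T.dist root w + 1 = T.dist root u)
  label_root : ∀ w : V, T.Adj root w → label root w = 1

namespace Setup

variable {V : Type} [Fintype V] [DecidableEq V] (S : Setup V)

/-- The unique geodesic (path) in the tree `T` from `u` to `w`. -/
noncomputable def geod (u w : V) : S.T.Walk u w := (S.T_tree.existsUnique_path u w).choose

/-- `g(u,w)`: the label at `u` of the first edge of the tree geodesic from `u` to `w`,
with `g(u,u) = 0`. -/
noncomputable def gfun (u w : V) : ℕ :=
  if u = w then 0 else S.label u ((S.geod u w).getVert 1)

lemma exists_wedge (u w : V) :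
    ∃ x : V, (x ∈ (S.geod S.root u).support ∧ x ∈ (S.geod S.root w).support) ∧
      ∀ y : V, y ∈ (S.geod S.root u).support → y ∈ (S.geod S.root w).support →
        S.T.dist S.root y ≤ S.T.dist S.root x := by
  classical
  have hne : ((S.geod S.root u).support.toFinset ∩
      (S.geod S.root w).support.toFinset).Nonempty :=
    ⟨S.root, by simp [SimpleGraph.Walk.start_mem_support]⟩
  obtain ⟨x, hx, hmax⟩ := Finset.exists_max_image _ (fun y => S.T.dist S.root y) hne
  simp only [Finset.mem_inter, List.mem_toFinset] at hx hmax
  exact ⟨x, ⟨hx.1, hx.2⟩, fun y h1 h2 => hmax y ⟨h1, h2⟩⟩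

/-- `u ∧ w`: the vertex farthest from the root lying on both tree geodesics from the
root to `u` and from the root to `w`. -/
noncomputable def wedge (u w : V) : V := (S.exists_wedge u w).choose

/-- The order on vertices: `u ≤ w` iff `u ∧ w = u`, or `u ∧ w ≠ u` and
`g(u ∧ w, u) < g(u ∧ w, w)`. -/
def vle (u w : V) : Prop :=
  S.wedge u w = u ∨ (S.wedge u w ≠ u ∧ S.gfun (S.wedge u w) u < S.gfun (S.wedge u w) w)

/-- The associated strict order on vertices. -/
def vlt (u w : V) : Prop := S.vle u w ∧ u ≠ w

/-- `ι(e)`: the larger endpoint of the edge `e` in the vertex order. -/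
noncomputable def iota (e : Sym2 V) : V :=
  if S.vle (Quot.out e).1 (Quot.out e).2 then (Quot.out e).2 else (Quot.out e).1

/-- `τ(e)`: the smaller endpoint of the edge `e` in the vertex order. -/
noncomputable def tau (e : Sym2 V) : V :=
  if S.vle (Quot.out e).1 (Quot.out e).2 then (Quot.out e).1 else (Quot.out e).2

/-- `e(v)`: the edge of `T` incident to `v` lying on the tree geodesic from `v` to the root. -/
noncomputable def eV (v : V) : Sym2 V := s(v, (S.geod v S.root).getVert 1)

/-- A cell of `UD^n Γ`: an `n`-element set whose elements are vertices (encoded as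
diagonal elements of `Sym2 V`) and closed edges of `G`, no two distinct elements of which
share a vertex. -/
def IsCell (n : ℕ) (c : Finset (Sym2 V)) : Prop :=
  c.card = n ∧ (∀ s ∈ c, s.IsDiag ∨ s ∈ S.G.edgeSet) ∧
    ∀ s ∈ c, ∀ t ∈ c, s ≠ t → ∀ x : V, x ∈ s → x ∉ t

/-- The dimension of a cell: the number of edges it contains. -/
noncomputable def dim (c : Finset (Sym2 V)) : ℕ := (c.filter (fun s => ¬ s.IsDiag)).card

/-- A vertex `v` is blocked in `c` if `v` is the root, or `e(v)` shares a vertex with some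
element of `c` other than `v`. -/
def Blocked (c : Finset (Sym2 V)) (v : V) : Prop :=
  v = S.root ∨ ∃ s ∈ c, s ≠ Sym2.diag v ∧ ∃ x : V, x ∈ S.eV v ∧ x ∈ s

/-- A vertex `v` is unblocked in `c` if it belongs to `c` and is not blocked. -/
def Unblocked (c : Finset (Sym2 V)) (v : V) : Prop := Sym2.diag v ∈ c ∧ ¬ S.Blocked c v

/-- The elementary reduction of `c` from the vertex `v`: replace `v` by the edge `e(v)`. -/
noncomputable def redFrom (c : Finset (Sym2 V)) (v : V) : Finset (Sym2 V) :=
  insert (S.eV v) (c.erase (Sym2.diag v))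

/-- `c'` is the principal elementary reduction of `c`: it is the elementary reduction of `c`
from the smallest unblocked vertex of `c`. -/
def PrincipalRedOf (c c' : Finset (Sym2 V)) : Prop :=
  ∃ v : V, S.Unblocked c v ∧ (∀ u : V, S.Unblocked c u → S.vle v u) ∧ c' = S.redFrom c v

/-- Auxiliary definition of redundancy, by induction on the dimension: a cell of
dimension `i` is redundant iff it has an unblocked vertex and it is not the principal
elementary reduction of a redundant cell of dimension `i - 1`. -/
def RedundantAux (n : ℕ) : ℕ → Finset (Sym2 V) → Prop
  | 0, c => ∃ v, S.Unblocked c v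
  | (i + 1), c => (∃ v, S.Unblocked c v) ∧
      ¬ ∃ c₀, S.IsCell n c₀ ∧ dim c₀ = i ∧ RedundantAux n i c₀ ∧ S.PrincipalRedOf c₀ c

/-- A cell is redundant if the discrete vector field `W` is defined on it. -/
def Redundant (n : ℕ) (c : Finset (Sym2 V)) : Prop := S.RedundantAux n (dim c) c

/-- A cell is collapsible if it lies in the image of `W`. -/
def Collapsible (n : ℕ) (c : Finset (Sym2 V)) : Prop :=
  ∃ c₀, S.IsCell n c₀ ∧ S.Redundant n c₀ ∧ S.PrincipalRedOf c₀ c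

/-- A cell is critical if it is neither redundant nor collapsible. -/
def Critical (n : ℕ) (c : Finset (Sym2 V)) : Prop :=
  ¬ S.Redundant n c ∧ ¬ S.Collapsible n c

/-- An edge `e` of the cell `c` is order-respecting in `c` if `e` lies in `T` and every
vertex `v ∈ c` such that `e(v)` and `e` share the vertex `τ(e)` satisfies `v > ι(e)`. -/
def OrderResp (c : Finset (Sym2 V)) (e : Sym2 V) : Prop :=
  e ∈ c ∧ e ∈ S.T.edgeSet ∧
    ∀ v : V, v ≠ S.root → Sym2.diag v ∈ c → S.tau e ∈ S.eV v → S.vlt (S.iota e) v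

/-- `e` is the minimal order-respecting edge of `c`. -/
def MinOrderResp (c : Finset (Sym2 V)) (e : Sym2 V) : Prop :=
  S.OrderResp c e ∧ ∀ e' : Sym2 V, S.OrderResp c e' → S.vle (S.iota e) (S.iota e')

/-- `c'` is a face of `c` obtained by replacing one edge of `c` by one of its endpoints. -/
def IsFace (c' c : Finset (Sym2 V)) : Prop :=
  ∃ (e : Sym2 V) (x : V), e ∈ c ∧ ¬ e.IsDiag ∧ x ∈ e ∧ c' = insert (Sym2.diag x) (c.erase e)

/-- `Γ` is sufficiently subdivided for `n`: every path between distinct vertices of degree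
`≠ 2` passes through at least `n - 1` edges, and every cycle has length at least `n + 1`. -/
def SuffSubdiv (n : ℕ) : Prop :=
  (∀ u v : V, u ≠ v → ncdeg S.G u ≠ 2 → ncdeg S.G v ≠ 2 →
    ∀ p : S.G.Walk u v, p.IsPath → n - 1 ≤ p.length) ∧
  (∀ v : V, ∀ p : S.G.Walk v v, p.IsCycle → n + 1 ≤ p.length)

end Setup

namespace Setup

variable {V : Type} [Fintype V] [DecidableEq V] (S : Setup V)

lemma geod_isPath (u w : V) : (S.geod u w).IsPath :=
  (S.T_tree.existsUnique_path u w).choose_spec.1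

lemma geod_unique {u w : V} (p : S.T.Walk u w) (hp : p.IsPath) : p = S.geod u w :=
  (S.T_tree.existsUnique_path u w).choose_spec.2 p hp

lemma geod_self (u : V) : S.geod u u = SimpleGraph.Walk.nil :=
  (S.geod_unique SimpleGraph.Walk.nil SimpleGraph.Walk.IsPath.nil).symm

lemma geod_reverse (u w : V) : (S.geod u w).reverse = S.geod w u :=
  S.geod_unique _ (S.geod_isPath u w).reverse

lemma dist_eq_length (u w : V) : S.T.dist u w = (S.geod u w).length := by
  refine le_antisymm (SimpleGraph.dist_le _) ?_
  obtain ⟨p, hp⟩ := SimpleGraph.Reachable.exists_walk_length_eq_dist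
    (S.T_tree.isConnected.preconnected u w)
  calc (S.geod u w).length = p.bypass.length := by
        rw [S.geod_unique p.bypass p.bypass_isPath]
    _ ≤ p.length := p.length_bypass_le
    _ = S.T.dist u w := hp

/-- The support of the root geodesic to `v`. -/
noncomputable def L (v : V) : List V := (S.geod S.root v).support

lemma self_mem_L (v : V) : v ∈ S.L v := SimpleGraph.Walk.end_mem_support _

lemma root_mem_L (v : V) : S.root ∈ S.L v := SimpleGraph.Walk.start_mem_support _

lemma L_root : S.L S.root = [S.root] := by
  unfold L; rw [S.geod_self]; rfl

lemma geod_takeUntil {v x : V} (h : x ∈ S.L v) :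
    (S.geod S.root v).takeUntil x h = S.geod S.root x :=
  S.geod_unique _ ((S.geod_isPath _ _).takeUntil h)

lemma geod_dropUntil {v x : V} (h : x ∈ S.L v) :
    (S.geod S.root v).dropUntil x h = S.geod x v :=
  S.geod_unique _ ((S.geod_isPath _ _).dropUntil h)

lemma geod_decomp {v x : V} (h : x ∈ S.L v) :
    (S.geod S.root x).append (S.geod x v) = S.geod S.root v := by
  rw [← S.geod_takeUntil h, ← S.geod_dropUntil h]
  exact SimpleGraph.Walk.take_spec _ h

lemma L_decomp {v x : V} (h : x ∈ S.L v) :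
    S.L v = S.L x ++ (S.geod x v).support.tail := by
  unfold L
  rw [← S.geod_decomp h, SimpleGraph.Walk.support_append]

lemma L_prefix {v x : V} (h : x ∈ S.L v) : S.L x <+: S.L v :=
  ⟨(S.geod x v).support.tail, (S.L_decomp h).symm⟩

lemma L_getLast (v : V) : (S.L v).getLast? = some v := by
  unfold L
  rw [List.getLast?_eq_getLast (by simp), SimpleGraph.Walk.getLast_support]

lemma L_inj {v w : V} (h : S.L v = S.L w) : v = w := by
  have := S.L_getLast v
  rw [h, S.L_getLast w] at this
  exact (Option.some_inj.mp this).symm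

lemma length_L (v : V) : (S.L v).length = S.T.dist S.root v + 1 := by
  unfold L
  rw [SimpleGraph.Walk.length_support, S.dist_eq_length]

lemma dist_le_of_mem_L {v x : V} (h : x ∈ S.L v) :
    S.T.dist S.root x ≤ S.T.dist S.root v := by
  have := (S.L_prefix h).length_le
  rw [S.length_L, S.length_L] at this
  omega

lemma eq_of_mem_L_dist {v x : V} (h : x ∈ S.L v)
    (hd : S.T.dist S.root x = S.T.dist S.root v) : x = v := by
  apply S.L_inj
  refine (S.L_prefix h).eq_of_length ?_
  rw [S.length_L, S.length_L, hd]

lemma dist_lt_of_mem_L {v x : V} (h : x ∈ S.L v) (hne : x ≠ v) :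
    S.T.dist S.root x < S.T.dist S.root v :=
  lt_of_le_of_ne (S.dist_le_of_mem_L h) (fun hd => hne (S.eq_of_mem_L_dist h hd))

lemma L_chain {v x y : V} (hx : x ∈ S.L v) (hy : y ∈ S.L v) :
    x ∈ S.L y ∨ y ∈ S.L x := by
  rcases List.prefix_or_prefix_of_prefix (S.L_prefix hx) (S.L_prefix hy) with h | h
  · exact Or.inl (h.subset (S.self_mem_L x))
  · exact Or.inr (h.subset (S.self_mem_L y))

lemma mem_L_antisymm {x y : V} (hx : x ∈ S.L y) (hy : y ∈ S.L x) : x = y :=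
  S.eq_of_mem_L_dist hx (le_antisymm (S.dist_le_of_mem_L hx) (S.dist_le_of_mem_L hy))

end Setup

namespace Setup

variable {V : Type} [Fintype V] [DecidableEq V] (S : Setup V)

lemma wedge_mem_left (u w : V) : S.wedge u w ∈ S.L u :=
  (S.exists_wedge u w).choose_spec.1.1

lemma wedge_mem_right (u w : V) : S.wedge u w ∈ S.L w :=
  (S.exists_wedge u w).choose_spec.1.2

lemma wedge_max {u w y : V} (hyu : y ∈ S.L u) (hyw : y ∈ S.L w) :
    S.T.dist S.root y ≤ S.T.dist S.root (S.wedge u w) :=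
  (S.exists_wedge u w).choose_spec.2 y hyu hyw

lemma wedge_eq {u w x : V} (hxu : x ∈ S.L u) (hxw : x ∈ S.L w)
    (hmax : ∀ y, y ∈ S.L u → y ∈ S.L w → S.T.dist S.root y ≤ S.T.dist S.root x) :
    S.wedge u w = x := by
  have h1 := S.wedge_mem_left u w
  have h2 := S.wedge_mem_right u w
  have hd : S.T.dist S.root (S.wedge u w) = S.T.dist S.root x :=
    le_antisymm (hmax _ h1 h2) (S.wedge_max hxu hxw)
  rcases S.L_chain h1 hxu with h | h
  · exact S.eq_of_mem_L_dist h hd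
  · exact (S.eq_of_mem_L_dist h hd.symm).symm

lemma wedge_eq_left {u w : V} (h : u ∈ S.L w) : S.wedge u w = u :=
  S.wedge_eq (S.self_mem_L u) h (fun y hy _ => S.dist_le_of_mem_L hy)

lemma wedge_eq_right {u w : V} (h : w ∈ S.L u) : S.wedge u w = w :=
  S.wedge_eq h (S.self_mem_L w) (fun y _ hy => S.dist_le_of_mem_L hy)

lemma vle_refl (u : V) : S.vle u u := Or.inl (S.wedge_eq_left (S.self_mem_L u))

lemma gfun_self (u : V) : S.gfun u u = 0 := by unfold gfun; simp

/-- The parent of a vertex: the next vertex on the geodesic towards the root. -/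
noncomputable def pa (v : V) : V := (S.geod v S.root).getVert 1

lemma eV_eq (v : V) : S.eV v = s(v, S.pa v) := rfl

lemma geod_root_cons {v : V} (h : v ≠ S.root) :
    ∃ (x : V) (hx : S.T.Adj v x) (q : S.T.Walk x S.root),
      S.geod v S.root = SimpleGraph.Walk.cons hx q := by
  cases hp : S.geod v S.root with
  | nil => exact absurd rfl h
  | cons hx q => exact ⟨_, hx, q, rfl⟩

lemma pa_adj {v : V} (h : v ≠ S.root) : S.T.Adj v (S.pa v) := by
  obtain ⟨x, hx, q, hq⟩ := S.geod_root_cons h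
  unfold pa
  rw [hq]
  simpa using hx

lemma pa_mem_L {v : V} (h : v ≠ S.root) : S.pa v ∈ S.L v := by
  obtain ⟨x, hx, q, hq⟩ := S.geod_root_cons h
  have hx1 : S.pa v = x := by unfold pa; rw [hq]; simp
  have : x ∈ (S.geod v S.root).support := by
    rw [hq]
    exact List.mem_cons_of_mem _ (SimpleGraph.Walk.start_mem_support q)
  rw [← S.geod_reverse S.root v, SimpleGraph.Walk.support_reverse,
    List.mem_reverse] at this
  rw [hx1]
  exact this

lemma pa_ne {v : V} (h : v ≠ S.root) : S.pa v ≠ v := (S.pa_adj h).ne'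

lemma dist_pa {v : V} (h : v ≠ S.root) :
    S.T.dist S.root (S.pa v) + 1 = S.T.dist S.root v := by
  have h1 : S.T.dist S.root (S.pa v) < S.T.dist S.root v :=
    S.dist_lt_of_mem_L (S.pa_mem_L h) (S.pa_ne h)
  have h2 : S.T.dist S.root v ≤ S.T.dist S.root (S.pa v) + 1 := by
    have := SimpleGraph.dist_le ((S.geod S.root (S.pa v)).concat (S.pa_adj h).symm)
    rwa [SimpleGraph.Walk.length_concat, ← S.dist_eq_length] at this
  omega

lemma pa_unique {a v : V} (hav : S.T.Adj a v) (ha : a ∈ S.L v) : a = S.pa v := by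
  have hsingle : S.geod a v = SimpleGraph.Walk.cons hav SimpleGraph.Walk.nil :=
    (S.geod_unique _ (by simp [hav.ne])).symm
  have hdec := S.geod_decomp ha
  rw [hsingle] at hdec
  have : S.geod v S.root = SimpleGraph.Walk.cons hav.symm (S.geod S.root a).reverse := by
    rw [← S.geod_reverse S.root v, ← hdec, SimpleGraph.Walk.reverse_append,
      SimpleGraph.Walk.reverse_cons, SimpleGraph.Walk.reverse_nil,
      SimpleGraph.Walk.nil_append, SimpleGraph.Walk.cons_append,
      SimpleGraph.Walk.nil_append]
  unfold pa
  rw [this]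
  simp

lemma mem_L_of_adj {a b : V} (hab : S.T.Adj a b) : a ∈ S.L b ∨ b ∈ S.L a := by
  by_cases h : b ∈ S.L a
  · exact Or.inr h
  · left
    have hpath : ((S.geod S.root a).concat hab).IsPath := by
      rw [SimpleGraph.Walk.isPath_def, SimpleGraph.Walk.support_concat,
        List.nodup_append']
      refine ⟨(S.geod_isPath _ _).support_nodup, List.nodup_singleton _, ?_⟩
      intro x hx hx'
      rw [List.mem_singleton] at hx'
      subst hx'
      exact h hx
    have := S.geod_unique _ hpath
    unfold L
    rw [← this, SimpleGraph.Walk.support_concat]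
    exact List.mem_append_left _ (S.self_mem_L a)

end Setup

section ListLex

lemma GB_lex_append_iff {l s t : List ℕ} {a b : ℕ} (hab : a ≠ b) :
    List.Lex (· < ·) (l ++ a :: s) (l ++ b :: t) ↔ a < b := by
  induction l with
  | nil =>
    constructor
    · intro h
      cases h with
      | rel h => exact h
      | cons h => exact absurd rfl hab
    · intro h
      exact List.Lex.rel h
  | cons c l ih =>
    constructor
    · intro h
      cases h with
      | rel h => exact absurd h (lt_irrefl c)
      | cons h => exact ih.mp h
    · intro h
      exact List.Lex.cons (ih.mpr h)

lemma GB_not_lex_of_prefix {l t : List ℕ} : ¬ List.Lex (· < ·) (l ++ t) l := by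
  induction l with
  | nil => intro h; cases h
  | cons c l ih =>
    intro h
    cases h with
    | rel h => exact lt_irrefl c h
    | cons h => exact ih h

lemma GB_lex_of_prefix_ne {l₁ l₂ : List ℕ} (h : l₁ <+: l₂) (hne : l₁ ≠ l₂) :
    List.Lex (· < ·) l₁ l₂ := by
  obtain ⟨t, rfl⟩ := h
  induction l₁ with
  | nil =>
    cases t with
    | nil => exact absurd rfl hne
    | cons a t => exact List.Lex.nil
  | cons c l ih =>
    rw [List.cons_append]
    refine List.Lex.cons (ih ?_)
    intro hh
    exact hne (by rw [List.cons_append, ← hh])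

end ListLex

namespace Setup

variable {V : Type} [Fintype V] [DecidableEq V] (S : Setup V)

/-- The sequence of labels along a walk, each edge labelled at its earlier endpoint. -/
noncomputable def labelSeq : {u w : V} → S.T.Walk u w → List ℕ
  | _, _, SimpleGraph.Walk.nil => []
  | u, _, SimpleGraph.Walk.cons (v := x) _ q => S.label u x :: labelSeq q

@[simp] lemma labelSeq_nil {u : V} : S.labelSeq (SimpleGraph.Walk.nil : S.T.Walk u u) = [] := by
  rw [labelSeq]

@[simp] lemma labelSeq_cons {u x w : V} (h : S.T.Adj u x) (q : S.T.Walk x w) :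
    S.labelSeq (SimpleGraph.Walk.cons h q) = S.label u x :: S.labelSeq q := rfl

lemma labelSeq_append {u v w : V} (p : S.T.Walk u v) (q : S.T.Walk v w) :
    S.labelSeq (p.append q) = S.labelSeq p ++ S.labelSeq q := by
  induction p with
  | nil => simp
  | cons h p ih => simp [ih]

lemma length_labelSeq {u w : V} (p : S.T.Walk u w) : (S.labelSeq p).length = p.length := by
  induction p with
  | nil => simp
  | cons h p ih => simp [ih]

/-- The label sequence along the root geodesic. -/
noncomputable def fL (v : V) : List ℕ := S.labelSeq (S.geod S.root v)

lemma length_fL (v : V) : (S.fL v).length = S.T.dist S.root v := by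
  unfold fL
  rw [S.length_labelSeq, S.dist_eq_length]

lemma fL_decomp {v x : V} (h : x ∈ S.L v) :
    S.fL v = S.fL x ++ S.labelSeq (S.geod x v) := by
  unfold fL
  rw [← S.geod_decomp h, S.labelSeq_append]

lemma fL_ne_of_mem_L {v x : V} (h : x ∈ S.L v) (hne : x ≠ v) : S.fL x ≠ S.fL v := by
  intro heq
  have := congrArg List.length heq
  rw [S.length_fL, S.length_fL] at this
  exact hne (S.eq_of_mem_L_dist h this)

lemma geod_cons_of_ne {m u : V} (h : m ≠ u) :
    ∃ (x : V) (hx : S.T.Adj m x) (q : S.T.Walk x u),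
      S.geod m u = SimpleGraph.Walk.cons hx q := by
  cases hp : S.geod m u with
  | nil => exact absurd rfl h
  | cons hx q => exact ⟨_, hx, q, rfl⟩

lemma next_mem_L {m u x : V} (hm : m ∈ S.L u) {hx : S.T.Adj m x} {q : S.T.Walk x u}
    (hq : S.geod m u = SimpleGraph.Walk.cons hx q) :
    x ∈ S.L u ∧ m ∈ S.L x := by
  have hdec := S.L_decomp hm
  have hsupp : (S.geod m u).support.tail = q.support := by rw [hq]; simp
  have hxq : x ∈ q.support := SimpleGraph.Walk.start_mem_support q
  have hxu : x ∈ S.L u := by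
    rw [hdec, hsupp]
    exact List.mem_append_right _ hxq
  refine ⟨hxu, ?_⟩
  rcases S.L_chain hxu hm with h | h
  · -- x ∈ L m : contradiction with nodup
    exfalso
    have hnodup : (S.L u).Nodup := (S.geod_isPath S.root u).support_nodup
    rw [hdec, hsupp] at hnodup
    have hdisj := List.disjoint_of_nodup_append hnodup
    exact hdisj h hxq
  · exact h

lemma key {u w : V} (h : u ≠ w) :
    (S.vle u w ↔ List.Lex (· < ·) (S.fL u) (S.fL w)) ∧ S.fL u ≠ S.fL w := by
  have hmu := S.wedge_mem_left u w
  have hmw := S.wedge_mem_right u w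
  set m := S.wedge u w with hm
  by_cases h1 : m = u
  · -- u ∈ L w
    have huw : u ∈ S.L w := h1 ▸ hmw
    have hpre : S.fL u <+: S.fL w := ⟨_, (S.fL_decomp huw).symm⟩
    have hne := S.fL_ne_of_mem_L huw h
    exact ⟨⟨fun _ => GB_lex_of_prefix_ne hpre hne, fun _ => Or.inl h1⟩, hne⟩
  · by_cases h2 : m = w
    · have hwu : w ∈ S.L u := h2 ▸ hmu
      have hpre : S.fL w <+: S.fL u := ⟨_, (S.fL_decomp hwu).symm⟩
      have hne := S.fL_ne_of_mem_L hwu (Ne.symm h)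
      constructor
      · constructor
        · intro hv
          rcases hv with hv | ⟨_, hv⟩
          · exact absurd hv h1
          · rw [← hm, h2, S.gfun_self] at hv
            exact absurd hv (Nat.not_lt_zero _)
        · intro hlex
          obtain ⟨t, ht⟩ := hpre
          rw [← ht] at hlex
          exact absurd hlex GB_not_lex_of_prefix
      · exact fun hh => hne hh.symm
    · -- m differs from both u and w
      obtain ⟨x, hxadj, q₁, hq₁⟩ := S.geod_cons_of_ne h1
      obtain ⟨y, hyadj, q₂, hq₂⟩ := S.geod_cons_of_ne h2
      obtain ⟨hxu, hmx⟩ := S.next_mem_L hmu hq₁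
      obtain ⟨hyw, hmy⟩ := S.next_mem_L hmw hq₂
      have hxy : x ≠ y := by
        rintro rfl
        have h1' : S.T.dist S.root m < S.T.dist S.root x :=
          S.dist_lt_of_mem_L hmx hxadj.ne
        have h2' : S.T.dist S.root x ≤ S.T.dist S.root m := S.wedge_max hxu hyw
        omega
      have hmroot : m ≠ S.root := by
        intro hmr
        obtain ⟨z, hz⟩ := Set.ncard_eq_one.mp S.root_deg
        have hx' : x ∈ S.T.neighborSet S.root := by rw [← hmr]; exact hxadj
        have hy' : y ∈ S.T.neighborSet S.root := by rw [← hmr]; exact hyadj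
        rw [hz] at hx' hy'
        exact hxy (hx'.trans hy'.symm)
      have hlab : S.label m x ≠ S.label m y := by
        intro hl
        exact hxy ((S.label_bij m hmroot).injOn hxadj hyadj hl)
      have hgu : S.gfun m u = S.label m x := by
        unfold gfun
        rw [if_neg h1, hq₁]
        simp
      have hgw : S.gfun m w = S.label m y := by
        unfold gfun
        rw [if_neg h2, hq₂]
        simp
      have hfu : S.fL u = S.fL m ++ (S.label m x :: S.labelSeq q₁) := by
        rw [S.fL_decomp hmu, hq₁, S.labelSeq_cons]
      have hfw : S.fL w = S.fL m ++ (S.label m y :: S.labelSeq q₂) := by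
        rw [S.fL_decomp hmw, hq₂, S.labelSeq_cons]
      constructor
      · rw [hfu, hfw]
        rw [GB_lex_append_iff hlab]
        constructor
        · intro hv
          rcases hv with hv | ⟨_, hv⟩
          · exact absurd hv h1
          · rwa [← hm, hgu, hgw] at hv
        · intro hl
          exact Or.inr ⟨h1, by rw [← hm, hgu, hgw]; exact hl⟩
      · rw [hfu, hfw]
        intro heq
        have := List.append_cancel_left heq
        exact hlab (by injection this)

end Setup

section MinRel

lemma GB_lex_tri (l l' : List ℕ) : List.Lex (· < ·) l l' ∨ l = l' ∨ List.Lex (· < ·) l' l :=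
  trichotomous_of (List.Lex (· < ·)) l l'

lemma GB_lex_asymm {l l' : List ℕ} : List.Lex (· < ·) l l' → ¬ List.Lex (· < ·) l' l :=
  (List.Lex.asymm _).asymm l l'

lemma GB_lex_trans {l₁ l₂ l₃ : List ℕ} :
    List.Lex (· < ·) l₁ l₂ → List.Lex (· < ·) l₂ l₃ → List.Lex (· < ·) l₁ l₃ :=
  fun a b => List.lex_trans (fun h1 h2 => Nat.lt_trans h1 h2) a b

lemma GB_exists_min {α : Type} (r : α → α → Prop) (hrefl : ∀ a, r a a)
    (htrans : ∀ a b c, r a b → r b c → r a c) (htotal : ∀ a b, r a b ∨ r b a)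
    (s : Finset α) (hs : s.Nonempty) : ∃ a ∈ s, ∀ b ∈ s, r a b := by
  classical
  induction s using Finset.induction with
  | empty => exact absurd hs (by simp)
  | @insert x t hx ih =>
    by_cases ht : t.Nonempty
    · obtain ⟨a, ha, hmin⟩ := ih ht
      rcases htotal a x with h | h
      · exact ⟨a, Finset.mem_insert_of_mem ha, fun b hb => by
          rcases Finset.mem_insert.mp hb with rfl | hb
          · exact h
          · exact hmin b hb⟩
      · exact ⟨x, Finset.mem_insert_self x t, fun b hb => by
          rcases Finset.mem_insert.mp hb with rfl | hb
          · exact hrefl b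
          · exact htrans _ _ _ h (hmin b hb)⟩
    · rw [Finset.not_nonempty_iff_eq_empty] at ht
      subst ht
      exact ⟨x, Finset.mem_insert_self x ∅, fun b hb => by
        rcases Finset.mem_insert.mp hb with rfl | hb
        · exact hrefl b
        · exact absurd hb (by simp)⟩

end MinRel

namespace Setup

variable {V : Type} [Fintype V] [DecidableEq V] (S : Setup V)

lemma vle_iff_lex {u w : V} (h : u ≠ w) :
    S.vle u w ↔ List.Lex (· < ·) (S.fL u) (S.fL w) := (S.key h).1

lemma fL_ne {u w : V} (h : u ≠ w) : S.fL u ≠ S.fL w := (S.key h).2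

lemma vle_total (u w : V) : S.vle u w ∨ S.vle w u := by
  by_cases h : u = w
  · exact Or.inl (h ▸ S.vle_refl u)
  · rcases GB_lex_tri (S.fL u) (S.fL w) with hl | hl | hl
    · exact Or.inl ((S.vle_iff_lex h).mpr hl)
    · exact absurd hl (S.fL_ne h)
    · exact Or.inr ((S.vle_iff_lex (Ne.symm h)).mpr hl)

lemma vle_antisymm {u w : V} (h1 : S.vle u w) (h2 : S.vle w u) : u = w := by
  by_contra h
  have l1 := (S.vle_iff_lex h).mp h1
  have l2 := (S.vle_iff_lex (Ne.symm h)).mp h2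
  exact GB_lex_asymm l1 l2

lemma vle_trans {u w z : V} (h1 : S.vle u w) (h2 : S.vle w z) : S.vle u z := by
  by_cases huw : u = w
  · exact huw ▸ h2
  by_cases hwz : w = z
  · exact hwz ▸ h1
  by_cases huz : u = z
  · exact huz ▸ S.vle_refl u
  · exact (S.vle_iff_lex huz).mpr
      (GB_lex_trans ((S.vle_iff_lex huw).mp h1) ((S.vle_iff_lex hwz).mp h2))

lemma not_vle_of_mem_L {a b : V} (ha : a ∈ S.L b) (hne : a ≠ b) : ¬ S.vle b a := by
  intro hv
  rcases hv with hv | ⟨hv1, hv2⟩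
  · rw [S.wedge_eq_right ha] at hv
    exact hne hv
  · rw [S.wedge_eq_right ha, S.gfun_self] at hv2
    exact Nat.not_lt_zero _ hv2

lemma vle_of_mem_L {a b : V} (ha : a ∈ S.L b) : S.vle a b :=
  Or.inl (S.wedge_eq_left ha)

lemma iota_tau_of {a b : V} (hab : S.T.Adj a b) (ha : a ∈ S.L b) :
    S.iota s(a, b) = b ∧ S.tau s(a, b) = a := by
  have hvab : S.vle a b := S.vle_of_mem_L ha
  have hvba : ¬ S.vle b a := S.not_vle_of_mem_L ha hab.ne
  have hout : s((Quot.out (s(a, b) : Sym2 V)).1, (Quot.out (s(a, b) : Sym2 V)).2)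
      = s(a, b) := Quot.out_eq _
  rw [Sym2.eq_iff] at hout
  unfold iota tau
  rcases hout with ⟨h1, h2⟩ | ⟨h1, h2⟩
  · rw [h1, h2, if_pos hvab, if_pos hvab]
    exact ⟨rfl, rfl⟩
  · rw [h1, h2, if_neg hvba, if_neg hvba]
    exact ⟨rfl, rfl⟩

lemma edge_anatomy {e : Sym2 V} (he : e ∈ S.T.edgeSet) :
    S.T.Adj (S.tau e) (S.iota e) ∧ S.tau e ∈ S.L (S.iota e) ∧
      S.iota e ≠ S.root ∧ S.tau e = S.pa (S.iota e) ∧ e = S.eV (S.iota e) := by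
  have main : S.T.Adj (S.tau e) (S.iota e) ∧ S.tau e ∈ S.L (S.iota e) ∧
      e = s(S.tau e, S.iota e) := by
    induction e with
    | _ a b =>
      have hab : S.T.Adj a b := he
      rcases S.mem_L_of_adj hab with ha | hb
      · obtain ⟨h1, h2⟩ := S.iota_tau_of hab ha
        rw [h1, h2]
        exact ⟨hab, ha, rfl⟩
      · rw [Sym2.eq_swap]
        obtain ⟨h1, h2⟩ := S.iota_tau_of hab.symm hb
        rw [h1, h2]
        exact ⟨hab.symm, hb, rfl⟩
  obtain ⟨hadj, hmem, heq⟩ := main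
  have hroot : S.iota e ≠ S.root := by
    intro hr
    rw [hr] at hmem
    rw [S.L_root, List.mem_singleton] at hmem
    rw [hr, hmem] at hadj
    exact S.T.loopless.irrefl _ hadj
  have hpa : S.tau e = S.pa (S.iota e) := S.pa_unique hadj hmem
  refine ⟨hadj, hmem, hroot, hpa, ?_⟩
  rw [S.eV_eq, ← hpa, Sym2.eq_swap]
  exact heq

lemma iota_tau_eV {v : V} (h : v ≠ S.root) :
    S.iota (S.eV v) = v ∧ S.tau (S.eV v) = S.pa v := by
  have := S.iota_tau_of (S.pa_adj h).symm (S.pa_mem_L h)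
  rw [S.eV_eq, Sym2.eq_swap]
  exact this

end Setup

namespace Setup

variable {V : Type} [Fintype V] [DecidableEq V] (S : Setup V)

lemma mem_diag_iff' {x u : V} : x ∈ Sym2.diag u ↔ x = u := by
  unfold Sym2.diag
  rw [Sym2.mem_iff]
  simp

lemma self_mem_diag' (u : V) : u ∈ Sym2.diag u := mem_diag_iff'.mpr rfl

lemma eV_not_isDiag {v : V} (h : v ≠ S.root) : ¬ (S.eV v).IsDiag := by
  rw [S.eV_eq]
  rw [Sym2.isDiag_iff_proj_eq]
  exact (S.pa_adj h).ne

lemma self_mem_eV (v : V) : v ∈ S.eV v := by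
  rw [S.eV_eq, Sym2.mem_iff]
  exact Or.inl rfl

lemma pa_mem_eV (v : V) : S.pa v ∈ S.eV v := by
  rw [S.eV_eq, Sym2.mem_iff]
  exact Or.inr rfl

lemma no_unblocked_of_critical {n : ℕ} {c : Finset (Sym2 V)} (hcrit : S.Critical n c) :
    ∀ v, ¬ S.Unblocked c v := by
  intro v hv
  obtain ⟨hnr, hnc⟩ := hcrit
  unfold Redundant at hnr
  cases hd : dim c with
  | zero =>
    rw [hd] at hnr
    exact hnr ⟨v, hv⟩
  | succ i =>
    rw [hd] at hnr
    simp only [RedundantAux, not_and_or, not_not] at hnr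
    rcases hnr with h | h
    · exact h ⟨v, hv⟩
    · obtain ⟨c₀, h1, h2, h3, h4⟩ := h
      exact hnc ⟨c₀, h1, by unfold Redundant; rw [h2]; exact h3, h4⟩

lemma no_OR_of_critical {n : ℕ} {c : Finset (Sym2 V)}
    (hc : S.IsCell n c) (hcrit : S.Critical n c) : ∀ e, ¬ S.OrderResp c e := by
  intro e0 he0
  classical
  set OR : Finset (Sym2 V) := c.filter (fun e => S.OrderResp c e) with hOR
  have hORne : OR.Nonempty := ⟨e0, by rw [hOR, Finset.mem_filter]; exact ⟨he0.1, he0⟩⟩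
  obtain ⟨e, heOR, hemin0⟩ := GB_exists_min (fun e e' => S.vle (S.iota e) (S.iota e'))
    (fun _ => S.vle_refl _) (fun _ _ _ h1 h2 => S.vle_trans h1 h2)
    (fun a b => S.vle_total _ _) OR hORne
  rw [hOR, Finset.mem_filter] at heOR
  obtain ⟨hec, he⟩ := heOR
  have hemin : ∀ e', S.OrderResp c e' → S.vle (S.iota e) (S.iota e') := fun e' h' =>
    hemin0 e' (Finset.mem_filter.mpr ⟨h'.1, h'⟩)
  have heT : e ∈ S.T.edgeSet := he.2.1
  obtain ⟨hadj, hmemL, hroot, hpaeq, heV⟩ := S.edge_anatomy heT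
  set v := S.iota e with hv
  set t := S.tau e with ht
  have hdisj := hc.2.2
  have heVt : e = s(v, t) := by rw [heV, S.eV_eq, hpaeq]
  have hed : ¬ e.IsDiag := by rw [heV]; exact S.eV_not_isDiag hroot
  have hvmem : v ∈ e := by rw [heVt, Sym2.mem_iff]; exact Or.inl rfl
  have hdvc : Sym2.diag v ∉ c := by
    intro h
    exact hdisj e hec (Sym2.diag v) h
      (fun hh => hed (by rw [hh]; exact Sym2.diag_isDiag v)) v hvmem (self_mem_diag' v)
  set c' : Finset (Sym2 V) := insert (Sym2.diag v) (c.erase e) with hc'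
  have hdve : Sym2.diag v ∉ c.erase e := fun h => hdvc (Finset.mem_of_mem_erase h)
  have hsub : ∀ s ∈ c.erase e, s ∈ c' := fun s hs => Finset.mem_insert_of_mem hs
  have hmemc' : ∀ s ∈ c', s = Sym2.diag v ∨ (s ∈ c ∧ s ≠ e) := by
    intro s hs
    rcases Finset.mem_insert.mp hs with h | h
    · exact Or.inl h
    · exact Or.inr ⟨Finset.mem_of_mem_erase h, Finset.ne_of_mem_erase h⟩
  have hcell' : S.IsCell n c' := by
    refine ⟨?_, ?_, ?_⟩
    · have hpos : 0 < n := hc.1 ▸ Finset.card_pos.mpr ⟨e, hec⟩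
      rw [hc', Finset.card_insert_of_notMem hdve, Finset.card_erase_of_mem hec, hc.1]
      omega
    · intro s hs
      rcases hmemc' s hs with h | ⟨h, _⟩
      · exact Or.inl (h ▸ Sym2.diag_isDiag v)
      · exact hc.2.1 s h
    · intro s hs u hu hne x hxs hxu
      rcases hmemc' s hs with h | ⟨h, hne1⟩ <;> rcases hmemc' u hu with h' | ⟨h', hne2⟩
      · exact hne (h.trans h'.symm)
      · subst h
        rw [mem_diag_iff'] at hxs
        rw [hxs] at hxu
        exact hdisj e hec u h' (fun hh => hne2 hh.symm) v hvmem hxu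
      · subst h'
        rw [mem_diag_iff'] at hxu
        rw [hxu] at hxs
        exact hdisj e hec s h (fun hh => hne1 hh.symm) v hvmem hxs
      · exact hdisj s h u h' hne x hxs hxu
  have hunb : S.Unblocked c' v := by
    refine ⟨Finset.mem_insert_self _ _, ?_⟩
    rintro (h | ⟨s, hs, hsne, x, hxeV, hxs⟩)
    · exact hroot h
    · rw [← heV] at hxeV
      rcases hmemc' s hs with h | ⟨h, hne1⟩
      · exact hsne h
      · exact hdisj e hec s h (fun hh => hne1 hh.symm) x hxeV hxs
  have hminu : ∀ u, S.Unblocked c' u → S.vle v u := by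
    intro u hu
    by_cases huv : u = v
    · exact huv ▸ S.vle_refl v
    have hduc : Sym2.diag u ∈ c := by
      rcases hmemc' _ hu.1 with h | ⟨h, _⟩
      · exact absurd (Sym2.diag_injective h) huv
      · exact h
    have huroot : u ≠ S.root := fun h => hu.2 (Or.inl h)
    have hblocked : S.Blocked c u := by
      by_contra hb
      exact S.no_unblocked_of_critical hcrit u ⟨hduc, hb⟩
    rcases hblocked with h | ⟨s, hs, hsne, x, hxeV, hxs⟩
    · exact absurd h huroot
    by_cases hse : s = e
    · subst hse
      rcases (by rw [S.eV_eq, Sym2.mem_iff] at hxeV; exact hxeV : x = u ∨ x = S.pa u)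
        with hxu | hxp
      · rw [hxu] at hxs
        exact absurd (self_mem_diag' u)
          (hdisj s hs (Sym2.diag u) hduc
            (fun hh => hed (by rw [hh]; exact Sym2.diag_isDiag u)) u hxs)
      · subst hxp
        rcases (by rw [heVt, Sym2.mem_iff] at hxs; exact hxs : S.pa u = v ∨ S.pa u = t)
          with hpv | hpt
        · exfalso
          apply hu.2
          refine Or.inr ⟨Sym2.diag v, Finset.mem_insert_self _ _,
            fun hh => huv (Sym2.diag_injective hh.symm), v, ?_, self_mem_diag' v⟩
          rw [← hpv]
          exact S.pa_mem_eV u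
        · have := he.2.2 u huroot hduc (by rw [← ht, ← hpt]; exact S.pa_mem_eV u)
          exact this.1
    · exfalso
      apply hu.2
      exact Or.inr ⟨s, hsub s (Finset.mem_erase.mpr ⟨hse, hs⟩), hsne, x, hxeV, hxs⟩
  have hredeq : S.redFrom c' v = c := by
    unfold redFrom
    rw [hc', Finset.erase_insert hdve, ← heV, Finset.insert_erase hec]
  have hPR : S.PrincipalRedOf c' c := ⟨v, hunb, hminu, hredeq.symm⟩
  have henotc' : e ∉ c' := by
    intro h
    rcases hmemc' e h with h' | ⟨_, h'⟩
    · exact hed (by rw [h']; exact Sym2.diag_isDiag v)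
    · exact h' rfl
  have hred : S.Redundant n c' := by
    unfold Redundant
    cases hd : dim c' with
    | zero => exact ⟨v, hunb⟩
    | succ i =>
      show (∃ u, S.Unblocked c' u) ∧ ¬ ∃ c₀, S.IsCell n c₀ ∧ dim c₀ = i ∧
        S.RedundantAux n i c₀ ∧ S.PrincipalRedOf c₀ c'
      refine ⟨⟨v, hunb⟩, ?_⟩
      rintro ⟨c₁, hc₁cell, hc₁dim, hc₁red, v₁, hv₁unb, hv₁min, hco⟩
      have hdisj₁ := hc₁cell.2.2
      have hv₁root : v₁ ≠ S.root := fun h => hv₁unb.2 (Or.inl h)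
      set e' := S.eV v₁ with he'
      have hiotatau := S.iota_tau_eV hv₁root
      have he'd : ¬ e'.IsDiag := S.eV_not_isDiag hv₁root
      have hv₁c₁ : Sym2.diag v₁ ∈ c₁ := hv₁unb.1
      have he'notc₁ : e' ∉ c₁ := by
        intro h
        exact hdisj₁ e' h (Sym2.diag v₁) hv₁c₁
          (fun hh => he'd (by rw [hh]; exact Sym2.diag_isDiag v₁)) v₁ (S.self_mem_eV v₁)
          (self_mem_diag' v₁)
      have hc'eq : c' = insert e' (c₁.erase (Sym2.diag v₁)) := hco
      have he'c' : e' ∈ c' := hc'eq ▸ Finset.mem_insert_self _ _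
      have hdv₁c' : Sym2.diag v₁ ∉ c' := by
        rw [hc'eq]
        intro h
        rcases Finset.mem_insert.mp h with h | h
        · exact he'd (by rw [← h]; exact Sym2.diag_isDiag v₁)
        · exact (Finset.mem_erase.mp h).1 rfl
      have he'X : e' ∉ c₁.erase (Sym2.diag v₁) := fun h => he'notc₁ (Finset.mem_of_mem_erase h)
      have hc₁eq : c₁ = insert (Sym2.diag v₁) (c'.erase e') := by
        rw [hc'eq, Finset.erase_insert he'X, Finset.insert_erase hv₁c₁]
      have he'ne_dv : e' ≠ Sym2.diag v := fun hh => he'd (by rw [hh]; exact Sym2.diag_isDiag v)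
      have he'c : e' ∈ c := by
        rcases hmemc' e' he'c' with h | ⟨h, _⟩
        · exact absurd h he'ne_dv
        · exact h
      have he'ne_e : e' ≠ e := by
        intro h
        rw [h] at he'c'
        exact henotc' he'c'
      have hv₁ne_v : v₁ ≠ v := by
        intro h
        apply hdv₁c'
        rw [h, hc']
        exact Finset.mem_insert_self _ _
      have hv₁notin_e : v₁ ∉ e := hdisj e' he'c e hec he'ne_e v₁ (S.self_mem_eV v₁)
      have hdv₁c : Sym2.diag v₁ ∉ c := by
        intro h
        apply hdv₁c'
        rw [hc']
        exact Finset.mem_insert_of_mem (Finset.mem_erase.mpr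
          ⟨fun hh => hed (by rw [← hh]; exact Sym2.diag_isDiag v₁), h⟩)
      have hdvc' : Sym2.diag v ∈ c' := by rw [hc']; exact Finset.mem_insert_self _ _
      have hdvc₁ : Sym2.diag v ∈ c₁ := by
        rw [hc₁eq]
        exact Finset.mem_insert_of_mem (Finset.mem_erase.mpr
          ⟨fun hh => he'ne_dv hh.symm, hdvc'⟩)
      have hvunb₁ : S.Unblocked c₁ v := by
        refine ⟨hdvc₁, ?_⟩
        rintro (h | ⟨s, hs, hsne, x, hxeV, hxs⟩)
        · exact hroot h
        rw [hc₁eq] at hs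
        rcases Finset.mem_insert.mp hs with h | h
        · subst h
          rw [mem_diag_iff'] at hxs
          rw [hxs, ← heV] at hxeV
          exact hv₁notin_e hxeV
        · exact hunb.2 (Or.inr ⟨s, Finset.mem_of_mem_erase h, hsne, x, hxeV, hxs⟩)
      have hvle₁ : S.vle v₁ v := hv₁min v hvunb₁
      have hORe' : S.OrderResp c e' := by
        refine ⟨he'c, ?_, ?_⟩
        · rw [he', S.eV_eq]
          exact (S.pa_adj hv₁root : S.T.Adj v₁ (S.pa v₁))
        intro w hwroot hwc htauin
        rw [hiotatau.2] at htauin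
        have hwne_v₁ : w ≠ v₁ := fun hh => hdv₁c (hh ▸ hwc)
        have hwc' : Sym2.diag w ∈ c' := by
          rw [hc']
          exact Finset.mem_insert_of_mem (Finset.mem_erase.mpr
            ⟨fun hh => hed (by rw [← hh]; exact Sym2.diag_isDiag w), hwc⟩)
        have hwc₁ : Sym2.diag w ∈ c₁ := by
          rw [hc₁eq]
          exact Finset.mem_insert_of_mem (Finset.mem_erase.mpr
            ⟨fun hh => he'd (by rw [← hh]; exact Sym2.diag_isDiag w), hwc'⟩)
        rcases (by rw [S.eV_eq, Sym2.mem_iff] at htauin; exact htauin :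
            S.pa v₁ = w ∨ S.pa v₁ = S.pa w) with hpw | hpp
        · exfalso
          have hwmem : w ∈ e' := by rw [← hpw]; exact S.pa_mem_eV v₁
          exact hdisj e' he'c (Sym2.diag w) hwc
            (fun hh => he'd (by rw [hh]; exact Sym2.diag_isDiag w)) w hwmem
            (self_mem_diag' w)
        · have hwunb₁ : S.Unblocked c₁ w := by
            refine ⟨hwc₁, ?_⟩
            rintro (h | ⟨s, hs, hsne, x, hxeV, hxs⟩)
            · exact hwroot h
            rcases (by rw [S.eV_eq, Sym2.mem_iff] at hxeV; exact hxeV :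
                x = w ∨ x = S.pa w) with h1 | h1
            · rw [h1] at hxs
              exact hdisj₁ (Sym2.diag w) hwc₁ s hs (fun hh => hsne hh.symm) w
                (self_mem_diag' w) hxs
            · have hsne₁ : s ≠ Sym2.diag v₁ := by
                intro hh
                subst hh
                rw [mem_diag_iff'] at hxs
                apply S.pa_ne hv₁root
                rw [hpp, ← h1, hxs]
              exact hv₁unb.2 (Or.inr ⟨s, hs, hsne₁, x,
                by rw [h1, ← hpp]; exact S.pa_mem_eV v₁, hxs⟩)
          have hwv₁ := hv₁min w hwunb₁
          constructor
          · rw [he', hiotatau.1]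
            exact hwv₁
          · rw [he', hiotatau.1]
            exact fun hh => hwne_v₁ hh.symm
      have hvlev₁ : S.vle v v₁ := by
        have := hemin e' hORe'
        rwa [he', hiotatau.1] at this
      exact hv₁ne_v (S.vle_antisymm hvle₁ hvlev₁)
  exact hcrit.2 ⟨c', hcell', hred, hPR⟩

end Setup

/-- If `Γ` is a tree (`T = Γ`) then every critical cell of `UD^nΓ` has dimension at most
`min(⌊n/2⌋, m)`, where `m` is the number of essential vertices. -/
theorem stmt13 {V : Type} [Fintype V] [DecidableEq V] (S : Setup V) (n : ℕ) (hn : 1 ≤ n) (hsub : S.SuffSubdiv n) (hGT : S.G = S.T) :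
    ∀ c : Finset (Sym2 V), S.IsCell n c → S.Critical n c →
      Setup.dim c ≤ min (n / 2) ({v : V | 3 ≤ ncdeg S.G v}.ncard) := by
  intro c hcell hcrit
  classical
  set E : Finset (Sym2 V) := c.filter (fun s => ¬ s.IsDiag) with hE
  have hdisj := hcell.2.2
  have hmemE : ∀ e ∈ E, e ∈ c ∧ ¬ e.IsDiag := by
    intro e he
    rw [hE, Finset.mem_filter] at he
    exact he
  have hTset : ∀ e ∈ E, e ∈ S.T.edgeSet := by
    intro e he
    obtain ⟨h1, h2⟩ := hmemE e he
    rcases hcell.2.1 e h1 with h | h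
    · exact absurd h h2
    · rw [← hGT]
      exact h
  have hwit : ∀ e ∈ E, ∃ w : V, Sym2.diag w ∈ c ∧ w ≠ S.root ∧ S.pa w = S.tau e := by
    intro e heE
    obtain ⟨hecmem, hednot⟩ := hmemE e heE
    have heT := hTset e heE
    obtain ⟨hadj, hmemL, hroot, hpaeq, heV⟩ := S.edge_anatomy heT
    have hnotOR := S.no_OR_of_critical hcell hcrit e
    have hex : ¬ ∀ w : V, w ≠ S.root → Sym2.diag w ∈ c → S.tau e ∈ S.eV w →
        S.vlt (S.iota e) w := fun hall => hnotOR ⟨hecmem, heT, hall⟩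
    push_neg at hex
    obtain ⟨w, hwroot, hwc, htin, _⟩ := hex
    rcases (by rw [S.eV_eq, Sym2.mem_iff] at htin; exact htin :
        S.tau e = w ∨ S.tau e = S.pa w) with h | h
    · exfalso
      have htmem : S.tau e ∈ e := by
        have h0 : S.tau e ∈ S.eV (S.iota e) := by
          rw [S.eV_eq, ← hpaeq, Sym2.mem_iff]
          exact Or.inr rfl
        rwa [← heV] at h0
      rw [h] at htmem
      exact hdisj e hecmem (Sym2.diag w) hwc
        (fun hh => hednot (by rw [hh]; exact Sym2.diag_isDiag w)) w htmem
        (Setup.self_mem_diag' w)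
    · exact ⟨w, hwc, hwroot, h.symm⟩
  choose wit hwitc hwitroot hwitpa using hwit
  have htaumem : ∀ e (he : e ∈ E), S.tau e ∈ e := by
    intro e he
    obtain ⟨hadj, hmemL, hroot, hpaeq, heV⟩ := S.edge_anatomy (hTset e he)
    have h0 : S.tau e ∈ S.eV (S.iota e) := by
      rw [S.eV_eq, ← hpaeq, Sym2.mem_iff]
      exact Or.inr rfl
    rwa [← heV] at h0
  have htau_inj : ∀ e₁ (h₁ : e₁ ∈ E), ∀ e₂ (h₂ : e₂ ∈ E), S.tau e₁ = S.tau e₂ → e₁ = e₂ := by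
    intro e₁ h₁ e₂ h₂ htau
    by_contra hne
    have hm1 := htaumem e₁ h₁
    have hm2 := htaumem e₂ h₂
    rw [htau] at hm1
    exact hdisj e₁ (hmemE e₁ h₁).1 e₂ (hmemE e₂ h₂).1 hne (S.tau e₂)
      (htau ▸ htaumem e₁ h₁) hm2
  have hwnotin : ∀ e (he : e ∈ E), wit e he ∉ e := by
    intro e he
    exact hdisj (Sym2.diag (wit e he)) (hwitc e he) e (hmemE e he).1
      (fun hh => (hmemE e he).2 (by rw [← hh]; exact Sym2.diag_isDiag _)) (wit e he)
      (Setup.self_mem_diag' _)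
  -- Bound 1 : E.card ≤ (vertices of c).card
  have hbound1 : E.card ≤ (c.filter (fun s => s.IsDiag)).card := by
    refine Finset.card_le_card_of_injOn
      (fun e => if h : e ∈ E then Sym2.diag (wit e h) else e) (fun e he => ?_) ?_
    · simp only [dif_pos (Finset.mem_coe.mp he), Finset.mem_coe, Finset.mem_filter]
      exact ⟨hwitc e he, Sym2.diag_isDiag _⟩
    · intro e₁ h₁ e₂ h₂ hfe
      rw [Finset.mem_coe] at h₁ h₂
      simp only [dif_pos h₁, dif_pos h₂] at hfe
      have hw : wit e₁ h₁ = wit e₂ h₂ := Sym2.diag_injective hfe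
      have : S.tau e₁ = S.tau e₂ := by
        rw [← hwitpa e₁ h₁, ← hwitpa e₂ h₂, hw]
      exact htau_inj e₁ h₁ e₂ h₂ this
  -- Bound 2 : E.card ≤ number of essential vertices
  have hbound2 : E.card ≤ ({v : V | 3 ≤ ncdeg S.G v}.ncard) := by
    rw [Set.ncard_eq_toFinset_card' {v : V | 3 ≤ ncdeg S.G v}]
    refine Finset.card_le_card_of_injOn S.tau (fun e he => ?_)
      (fun e₁ h₁ e₂ h₂ hfe => htau_inj e₁ (Finset.mem_coe.mp h₁) e₂ (Finset.mem_coe.mp h₂) hfe)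
    rw [Finset.mem_coe, Set.mem_toFinset]
    show 3 ≤ ncdeg S.G (S.tau e)
    obtain ⟨hadj, hmemL, hroot, hpaeq, heV⟩ := S.edge_anatomy (hTset e he)
    set τ := S.tau e with hτ
    set ι := S.iota e with hι
    set w := wit e he with hw
    have hadjw : S.T.Adj τ w := by
      have := S.pa_adj (hwitroot e he)
      rw [hwitpa e he] at this
      exact this.symm
    have hιne_w : ι ≠ w := by
      intro hh
      apply hwnotin e he
      rw [← hw, ← hh, heV, S.eV_eq, Sym2.mem_iff]
      exact Or.inl rfl
    have hτroot : τ ≠ S.root := by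
      intro hh
      obtain ⟨z, hz⟩ := Set.ncard_eq_one.mp S.root_deg
      have h1 : ι ∈ S.T.neighborSet S.root := by rw [← hh]; exact hadj
      have h2 : w ∈ S.T.neighborSet S.root := by rw [← hh]; exact hadjw
      rw [hz] at h1 h2
      exact hιne_w (h1.trans h2.symm)
    have hd1 : S.T.dist S.root (S.pa τ) + 1 = S.T.dist S.root τ := S.dist_pa hτroot
    have hd2 : S.T.dist S.root τ + 1 = S.T.dist S.root ι := by
      have := S.dist_pa hroot
      rw [← hpaeq] at this
      exact this
    have hd3 : S.T.dist S.root τ + 1 = S.T.dist S.root w := by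
      have := S.dist_pa (hwitroot e he)
      rw [hwitpa e he] at this
      exact this
    have hpane_ι : S.pa τ ≠ ι := by
      intro hh
      rw [hh] at hd1
      omega
    have hpane_w : S.pa τ ≠ w := by
      intro hh
      rw [hh] at hd1
      omega
    have hsub3 : ({ι, w, S.pa τ} : Set V) ⊆ S.T.neighborSet τ := by
      intro z hz
      rcases hz with hz | hz | hz
      · rw [hz]; exact hadj
      · rw [hz]; exact hadjw
      · rw [hz]; exact S.pa_adj hτroot
    have h3 : ({ι, w, S.pa τ} : Set V).ncard = 3 := by
      rw [Set.ncard_eq_three]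
      exact ⟨ι, w, S.pa τ, hιne_w, fun hh => hpane_ι hh.symm, fun hh => hpane_w hh.symm, rfl⟩
    calc (3 : ℕ) = ({ι, w, S.pa τ} : Set V).ncard := h3.symm
      _ ≤ (S.T.neighborSet τ).ncard := Set.ncard_le_ncard hsub3 (Set.toFinite _)
      _ = ncdeg S.G τ := by rw [ncdeg, hGT]
  -- combine
  have hsplit : (c.filter (fun s => s.IsDiag)).card + E.card = n := by
    rw [hE, ← hcell.1]
    exact Finset.card_filter_add_card_filter_not _
  have hdim : Setup.dim c = E.card := rfl
  rw [hdim]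
  refine le_min ?_ hbound2
  rw [Nat.le_div_iff_mul_le (by norm_num : 0 < 2)]
  omega

end GraphBraid
end

section
/- Every finite connected simple graph Γ having at least one vertex of degree at least 3 admits a spanning tree T such that every edge of Γ not in T is incident to a vertex of Γ of degree at least 3. -/
open SimpleGraph

/-- Adding an edge between two components of an acyclic graph keeps it acyclic. -/
lemma aux_sup_edge_isAcyclic {V : Type} {K : SimpleGraph V} (hK : K.IsAcyclic)
    {a b : V} (hab : a ≠ b) (hreach : ¬ K.Reachable a b) :
    (K ⊔ SimpleGraph.edge a b).IsAcyclic := by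
  intro u c hc
  by_cases he : s(a, b) ∈ c.edges
  · have h := (SimpleGraph.adj_and_reachable_delete_edges_iff_exists_cycle
      (G := K ⊔ SimpleGraph.edge a b) (v := a) (w := b)).mpr ⟨u, c, hc, he⟩
    apply hreach
    refine h.2.mono ?_
    intro x y hxy
    simp only [SimpleGraph.sdiff_adj, SimpleGraph.sup_adj, SimpleGraph.fromEdgeSet_adj, SimpleGraph.deleteEdges_adj,
      Set.mem_singleton_iff, SimpleGraph.edge_adj] at hxy
    rcases hxy with ⟨hl | hr, hne⟩
    · exact hl
    · exfalso
      apply hne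
      rcases hr.1 with ⟨rfl, rfl⟩ | ⟨rfl, rfl⟩
      · rfl
      · exact Sym2.eq_swap
  · have hK' : ∀ e ∈ c.edges, e ∈ K.edgeSet := by
      intro e hec
      have h1 := c.edges_subset_edgeSet hec
      rw [SimpleGraph.edgeSet_sup, SimpleGraph.edge_edgeSet_of_ne hab] at h1
      rcases h1 with h1 | h1
      · exact h1
      · simp only [Set.mem_singleton_iff] at h1
        exact absurd (h1 ▸ hec) he
    exact hK (c.transfer K hK') (hc.transfer hK')

/-- Any acyclic subgraph of a connected graph extends to a spanning tree. -/
lemma aux_exists_tree_between {V : Type} [Fintype V] [DecidableEq V]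
    {G H : SimpleGraph V} (hG : G.Connected) (hH : H ≤ G) (hHa : H.IsAcyclic) :
    ∃ T : SimpleGraph V, H ≤ T ∧ T ≤ G ∧ T.IsTree := by
  classical
  obtain ⟨K, ⟨hHK, hKG, hKa⟩, hmax⟩ := Set.Finite.exists_maximalFor id
    {K : SimpleGraph V | H ≤ K ∧ K ≤ G ∧ K.IsAcyclic} (Set.toFinite _)
    ⟨H, le_refl _, hH, hHa⟩
  have key : ∀ a b : V, G.Adj a b → K.Reachable a b := by
    intro a b hab
    by_contra hr
    have hane : a ≠ b := hab.ne
    have hedge : SimpleGraph.edge a b ≤ G := by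
      intro x y hxy
      rw [SimpleGraph.edge_adj] at hxy
      rcases hxy.1 with ⟨rfl, rfl⟩ | ⟨rfl, rfl⟩
      · exact hab
      · exact hab.symm
    have hmem : K ⊔ SimpleGraph.edge a b ∈
        {K : SimpleGraph V | H ≤ K ∧ K ≤ G ∧ K.IsAcyclic} :=
      ⟨le_trans hHK le_sup_left, sup_le hKG hedge, aux_sup_edge_isAcyclic hKa hane hr⟩
    have heq := hmax hmem le_sup_left
    simp only [id] at heq
    have hKadj : K.Adj a b := by
      apply heq
      right
      rw [SimpleGraph.edge_adj]
      exact ⟨Or.inl ⟨rfl, rfl⟩, hane⟩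
    exact hr hKadj.reachable
  refine ⟨K, hHK, hKG, ⟨(K.connected_iff).mpr ⟨?_, hG.nonempty⟩, hKa⟩⟩
  intro x y
  obtain ⟨w⟩ := hG.preconnected x y
  induction w with
  | nil => exact Reachable.refl _
  | cons h p ih => exact (key _ _ h).trans ih

/-- Every finite connected simple graph having a vertex of degree at least 3 admits a
spanning tree `T` such that every edge of `Γ` not in `T` is incident to a vertex of `Γ`
of degree at least 3. -/
theorem stmt15 {V : Type} [Fintype V] [DecidableEq V] (G : SimpleGraph V)
    (hconn : G.Connected) (hess : ∃ v : V, 3 ≤ (G.neighborSet v).ncard) :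
    ∃ T : SimpleGraph V, T ≤ G ∧ T.IsTree ∧
      ∀ e ∈ G.edgeSet, e ∉ T.edgeSet →
        ∃ v : V, v ∈ e ∧ 3 ≤ (G.neighborSet v).ncard := by
  classical
  obtain ⟨v₀, hv₀⟩ := hess
  -- the subgraph of "small" edges: both endpoints have degree at most 2
  let H : SimpleGraph V :=
    { Adj := fun x y => G.Adj x y ∧ (G.neighborSet x).ncard ≤ 2 ∧ (G.neighborSet y).ncard ≤ 2
      symm := by
        constructor
        intro x y h
        exact ⟨h.1.symm, h.2.2, h.2.1⟩
      loopless := by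
        constructor
        intro x h
        exact G.loopless.irrefl x h.1 }
  have hHG : H ≤ G := fun x y h => h.1
  -- H is acyclic
  have hHa : H.IsAcyclic := by
    intro u c hc
    -- every vertex of the cycle has two distinct H-neighbors on the cycle
    have htwo : ∀ x ∈ c.support, ∃ b b' : V, b ≠ b' ∧ H.Adj x b ∧ H.Adj x b' ∧
        b ∈ c.support ∧ b' ∈ c.support := by
      intro x hx
      have hc' := hc.rotate hx
      have hedges : ∀ e, e ∈ (c.rotate x hx).edges ↔ e ∈ c.edges :=
        fun e => (c.rotate_edges x hx).mem_iff
      obtain ⟨b, h, q, hcons⟩ := SimpleGraph.Walk.not_nil_iff.mp hc'.not_nil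
      have hxb : x ≠ b := h.ne
      obtain ⟨b', h2, q2, hcons2⟩ := SimpleGraph.Walk.exists_eq_cons_of_ne hxb q.reverse
      have he1 : s(x, b) ∈ (c.rotate x hx).edges := by
        rw [hcons, SimpleGraph.Walk.edges_cons]
        exact List.mem_cons_self
      have he2q : s(x, b') ∈ q.edges := by
        have : s(x, b') ∈ q.reverse.edges := by
          rw [hcons2, SimpleGraph.Walk.edges_cons]
          exact List.mem_cons_self
        rwa [SimpleGraph.Walk.edges_reverse, List.mem_reverse] at this
      have he2 : s(x, b') ∈ (c.rotate x hx).edges := by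
        rw [hcons, SimpleGraph.Walk.edges_cons]
        exact List.mem_cons_of_mem _ he2q
      have hnodup : ((c.rotate x hx).edges).Nodup := hc'.edges_nodup
      have hbb' : b ≠ b' := by
        rintro rfl
        rw [hcons, SimpleGraph.Walk.edges_cons] at hnodup
        exact (List.nodup_cons.mp hnodup).1 he2q
      refine ⟨b, b', hbb', h, h2, ?_, ?_⟩
      · exact c.snd_mem_support_of_mem_edges ((hedges _).mp he1)
      · exact c.snd_mem_support_of_mem_edges ((hedges _).mp he2)
    -- vertices on the cycle have degree at most 2 in G
    have hdeg : ∀ x ∈ c.support, (G.neighborSet x).ncard ≤ 2 := by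
      intro x hx
      obtain ⟨b, b', _, hb, _, _, _⟩ := htwo x hx
      exact hb.2.1
    -- the support of the cycle is closed under G-adjacency
    have hclosed : ∀ x ∈ c.support, ∀ y : V, G.Adj x y → y ∈ c.support := by
      intro x hx y hxy
      obtain ⟨b, b', hbb', hb, hb', hbs, hb's⟩ := htwo x hx
      by_contra hy
      have hyb : y ≠ b := fun h => hy (h ▸ hbs)
      have hyb' : y ≠ b' := fun h => hy (h ▸ hb's)
      have hsub : {y, b, b'} ⊆ G.neighborSet x := by
        intro z hz
        rcases hz with rfl | rfl | rfl
        · exact hxy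
        · exact hb.1
        · exact hb'.1
      have h3 : ({y, b, b'} : Set V).ncard = 3 := by
        rw [Set.ncard_insert_of_notMem (by simp [hyb, hyb']) (Set.toFinite _),
          Set.ncard_insert_of_notMem (by simp [hbb']) (Set.toFinite _), Set.ncard_singleton]
      have := Set.ncard_le_ncard hsub (Set.toFinite _)
      omega
    -- hence every vertex of G is on the cycle
    have step : ∀ {a b : V} (_ : G.Walk a b), a ∈ c.support → b ∈ c.support := by
      intro a b w
      induction w with
      | nil => exact id
      | cons h p ih => exact fun ha => ih (hclosed _ ha _ h)
    have hall : ∀ x : V, x ∈ c.support := by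
      intro x
      obtain ⟨w⟩ := hconn.preconnected u x
      exact step w c.start_mem_support
    have := hdeg v₀ (hall v₀)
    omega
  obtain ⟨T, hHT, hTG, hT⟩ := aux_exists_tree_between hconn hHG hHa
  refine ⟨T, hTG, hT, ?_⟩
  intro e he heT
  induction e with
  | _ x y =>
    by_contra hcon
    push_neg at hcon
    simp only [Sym2.mem_iff] at hcon
    have hx : (G.neighborSet x).ncard ≤ 2 := by
      have := hcon x (Or.inl rfl); omega
    have hy : (G.neighborSet y).ncard ≤ 2 := by
      have := hcon y (Or.inr rfl); omega
    have hadj : H.Adj x y := ⟨(G.mem_edgeSet).mp he, hx, hy⟩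
    exact heT ((T.mem_edgeSet).mpr (hHT hadj))
end
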